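/- arXiv:2508.15071 — 5 statements merged into one kernel-verified Lean document; each statement's English description precedes it below -/
import Mathlib

section
/- If f : ℝ^d → ℝ is nonnegative, coordinate-wise smooth with constants L_1,…,L_d, and its infimum f* satisfies f* ≥ 0, then the NGN-D per-coordinate step-size γ_j = c_j/(1 + (c_j/(2 f(x)))(∂_j f(x))²) satisfies c_j/(1 + c_j L_j) ≤ γ_j ≤ c_j for all x with f(x) > 0 and all coordinates j. -/
/-!
Restricting the coordinate-wise smoothness inequality to the line `t ↦ x + t eⱼ` and using
`f ≥ 0` gives `0 ≤ f x + ∂ⱼf(x) t + (Lⱼ/2) t²` for every real `t`. A nonnegative quadratic has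
nonpositive discriminant, so `(∂ⱼf(x))² ≤ 2 Lⱼ f(x)`; this bounds the denominator of `γⱼ`
between `1` and `1 + cⱼ Lⱼ`.
-/

open RealInnerProductSpace

lemma sq_le_two_mul_mul_of_forall_quadratic_nonneg {a b c : ℝ}
    (h : ∀ t : ℝ, 0 ≤ a / 2 * t ^ 2 + b * t + c) : b ^ 2 ≤ 2 * a * c := by
  have hdisc : discrim (a / 2) b c ≤ 0 :=
    discrim_le_zero fun t => by simpa [sq, mul_assoc] using h t
  rw [discrim] at hdisc
  linarith

section CoordSmooth

variable {d : ℕ}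
    {f : EuclideanSpace ℝ (Fin d) → ℝ} {g : EuclideanSpace ℝ (Fin d) → EuclideanSpace ℝ (Fin d)}
    {L : Fin d → ℝ}

lemma le_add_mul_add_mul_sq_of_coordSmooth
    (hsmooth : ∀ x h, f (x + h) ≤ f x + ⟪g x, h⟫ + (1/2) * ∑ j, L j * (h j) ^ 2)
    (x : EuclideanSpace ℝ (Fin d)) (j : Fin d) (t : ℝ) :
    f (x + EuclideanSpace.single j t) ≤ f x + g x j * t + L j / 2 * t ^ 2 := by
  have hinner : ⟪g x, EuclideanSpace.single j t⟫ = g x j * t := by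
    simp [EuclideanSpace.inner_single_right, mul_comm]
  have hsum : ∑ i, L i * (EuclideanSpace.single j t i) ^ 2 = L j * t ^ 2 := by simp
  have hline := hsmooth x (EuclideanSpace.single j t)
  rw [hinner, hsum] at hline
  linarith

lemma sq_apply_le_two_mul_mul_of_coordSmooth_of_nonneg
    (hsmooth : ∀ x h, f (x + h) ≤ f x + ⟪g x, h⟫ + (1/2) * ∑ j, L j * (h j) ^ 2)
    (hnonneg : ∀ x, 0 ≤ f x) (x : EuclideanSpace ℝ (Fin d)) (j : Fin d) :
    (g x j) ^ 2 ≤ 2 * L j * f x :=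
  sq_le_two_mul_mul_of_forall_quadratic_nonneg fun t => by
    linarith [le_add_mul_add_mul_sq_of_coordSmooth hsmooth x j t,
      hnonneg (x + EuclideanSpace.single j t)]

end CoordSmooth

lemma div_one_add_div_mul_sq_mem_Icc {c L y s : ℝ} (hc : 0 < c) (hy : 0 < y)
    (hs : s ^ 2 ≤ 2 * L * y) :
    c / (1 + c / (2 * y) * s ^ 2) ∈ Set.Icc (c / (1 + c * L)) c := by
  have hterm_nonneg : 0 ≤ c / (2 * y) * s ^ 2 := by positivity
  have hterm_le : c / (2 * y) * s ^ 2 ≤ c * L := by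
    rw [div_mul_eq_mul_div, div_le_iff₀ (by positivity)]
    nlinarith
  constructor
  · exact div_le_div_of_nonneg_left hc.le (by positivity) (by linarith)
  · exact div_le_self hc.le (by linarith)

theorem ngn_d_stepsize_bounds_general {d : ℕ}
    (f : EuclideanSpace ℝ (Fin d) → ℝ)
    (g : EuclideanSpace ℝ (Fin d) → EuclideanSpace ℝ (Fin d))
    (L : Fin d → ℝ)
    (hsmooth : ∀ x h, f (x + h) ≤ f x + ⟪g x, h⟫ + (1/2) * ∑ j, L j * (h j) ^ 2)
    (hnonneg : ∀ x, 0 ≤ f x)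
    (c : Fin d → ℝ) (hc : ∀ j, 0 < c j)
    (x : EuclideanSpace ℝ (Fin d)) (hx : 0 < f x) (j : Fin d) :
    c j / (1 + c j * L j) ≤ c j / (1 + c j / (2 * f x) * (g x j) ^ 2) ∧
      c j / (1 + c j / (2 * f x) * (g x j) ^ 2) ≤ c j :=
  div_one_add_div_mul_sq_mem_Icc (hc j) hx
    (sq_apply_le_two_mul_mul_of_coordSmooth_of_nonneg hsmooth hnonneg x j)

theorem ngn_d_stepsize_bounds {d : ℕ}
    (f : EuclideanSpace ℝ (Fin d) → ℝ)
    (g : EuclideanSpace ℝ (Fin d) → EuclideanSpace ℝ (Fin d))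
    (hgrad : ∀ x, HasGradientAt f (g x) x)
    (L : Fin d → ℝ) (hL : ∀ j, 0 ≤ L j)
    (hsmooth : ∀ x h, f (x + h) ≤ f x + ⟪g x, h⟫ + (1/2) * ∑ j, L j * (h j) ^ 2)
    (hnonneg : ∀ x, 0 ≤ f x)
    (fstar : ℝ) (hglb : IsGLB (Set.range f) fstar) (hfstar : 0 ≤ fstar)
    (c : Fin d → ℝ) (hc : ∀ j, 0 < c j)
    (x : EuclideanSpace ℝ (Fin d)) (hx : 0 < f x) (j : Fin d) :
    c j / (1 + c j * L j) ≤ c j / (1 + c j / (2 * f x) * (g x j) ^ 2) ∧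
      c j / (1 + c j / (2 * f x) * (g x j) ^ 2) ≤ c j :=
  ngn_d_stepsize_bounds_general f g L hsmooth hnonneg c hc x hx j
end

section
/- Let f : ℝ^d → ℝ be convex and L-smooth with infimum f* ≥ 0, and let γ = c/(1 + (c/(2f(x)))‖∇f(x)‖²) be the NGN step-size at x. Then γ² ‖∇f(x)‖² ≤ (4cL/(1+2cL)) γ (f(x) − f*) + (2c²L/(1+cL)) · max{(2cL−1)/(2cL+1), 0} · f*. -/
/-!
For an `L`-smooth `f` the descent lemma gives, for every `t`,
`f* ≤ f (x - t ∇f x) ≤ f x - t ‖∇f x‖² + L t² / 2 ‖∇f x‖²`, hence `‖∇f x‖² ≤ 2 L (f x - f*)`.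
The NGN step `γ` satisfies `c γ ‖∇f x‖² = 2 f x (c - γ)`, which turns the claim into a polynomial
inequality in `γ`, `f x - f*` and `f*`. When `2 c L ≤ 1` it follows from `γ (1 + 2 c L) ≤ 2 c`;
otherwise it is an explicit nonnegative combination of the gradient bound, `γ ≤ c`, and `f* ≥ 0`.
-/

open InnerProductSpace

theorem le_two_mul_mul_of_forall_mul_sub_le {s L D : ℝ} (hL : 0 ≤ L)
    (h : ∀ t, t * s - L / 2 * t ^ 2 * s ≤ D) : s ≤ 2 * L * D := by
  rcases hL.eq_or_lt with rfl | hL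
  · rw [mul_zero, zero_mul]
    by_contra! hpos
    have := h ((D + 1) / s)
    rw [div_mul_cancel₀ _ hpos.ne'] at this
    linarith
  · have := h L⁻¹
    field_simp at this
    nlinarith

section Descent

variable {E : Type*} [NormedAddCommGroup E] [InnerProductSpace ℝ E]
  {f : E → ℝ} {g : E → E} {L : ℝ}

theorem hasDerivAt_comp_add_smul [CompleteSpace E] (hgrad : ∀ x, HasGradientAt f (g x) x)
    (x v : E) (t : ℝ) :
    HasDerivAt (fun t : ℝ => f (x + t • v)) ⟪g (x + t • v), v⟫_ℝ t := by
  have hline : HasDerivAt (fun t : ℝ => x + t • v) v t := by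
    simpa using ((hasDerivAt_id t).smul_const v).const_add x
  exact (hgrad (x + t • v)).hasFDerivAt.comp_hasDerivAt t hline

theorem inner_apply_add_smul_le_of_lipschitz (hlip : ∀ x y, ‖g x - g y‖ ≤ L * ‖x - y‖)
    (x v : E) {t : ℝ} (ht : 0 ≤ t) : ⟪g (x + t • v), v⟫_ℝ ≤ ⟪g x, v⟫_ℝ + L * t * ‖v‖ ^ 2 := by
  have h : ⟪g (x + t • v) - g x, v⟫_ℝ ≤ L * t * ‖v‖ ^ 2 := calc
    _ ≤ ‖g (x + t • v) - g x‖ * ‖v‖ := real_inner_le_norm _ _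
    _ ≤ L * ‖x + t • v - x‖ * ‖v‖ := by gcongr; exact hlip _ _
    _ = L * t * ‖v‖ ^ 2 := by
      rw [add_sub_cancel_left, norm_smul, Real.norm_of_nonneg ht]; ring
  rw [inner_sub_left] at h
  linarith

theorem le_add_inner_add_sq_of_lipschitz [CompleteSpace E] (hgrad : ∀ x, HasGradientAt f (g x) x)
    (hlip : ∀ x y, ‖g x - g y‖ ≤ L * ‖x - y‖) (x y : E) :
    f y ≤ f x + ⟪g x, y - x⟫_ℝ + L / 2 * ‖y - x‖ ^ 2 := by
  set v := y - x
  have hderiv := hasDerivAt_comp_add_smul hgrad x v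
  have hB (t : ℝ) : HasDerivAt (fun t => f x + t * ⟪g x, v⟫_ℝ + L / 2 * t ^ 2 * ‖v‖ ^ 2)
      (⟪g x, v⟫_ℝ + L * t * ‖v‖ ^ 2) t := by
    refine ((((hasDerivAt_id t).mul_const ⟪g x, v⟫_ℝ).const_add (f x)).add
      (((hasDerivAt_pow 2 t).const_mul (L / 2)).mul_const (‖v‖ ^ 2))).congr_deriv ?_
    simp only [one_mul]; ring
  have key := image_le_of_deriv_right_le_deriv_boundary (a := 0) (b := 1)
    (fun t _ => (hderiv t).continuousAt.continuousWithinAt)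
    (fun t _ => (hderiv t).hasDerivWithinAt) (by simp)
    (fun t _ => (hB t).continuousAt.continuousWithinAt)
    (fun t _ => (hB t).hasDerivWithinAt)
    (fun t ht => inner_apply_add_smul_le_of_lipschitz hlip x v ht.1)
    (Set.right_mem_Icc.2 zero_le_one)
  simpa [v] using key

theorem sq_norm_le_of_lipschitz_gradient [CompleteSpace E] (hgrad : ∀ x, HasGradientAt f (g x) x)
    (hlip : ∀ x y, ‖g x - g y‖ ≤ L * ‖x - y‖) (hL : 0 ≤ L) {m : ℝ} (hm : ∀ y, m ≤ f y) (x : E) :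
    ‖g x‖ ^ 2 ≤ 2 * L * (f x - m) := by
  refine le_two_mul_mul_of_forall_mul_sub_le hL fun t => ?_
  have h := le_add_inner_add_sq_of_lipschitz hgrad hlip x (x - t • g x)
  rw [sub_sub_cancel_left, inner_neg_right, real_inner_smul_right, real_inner_self_eq_norm_sq,
    norm_neg, norm_smul, mul_pow, Real.norm_eq_abs, sq_abs] at h
  linarith [hm (x - t • g x)]

end Descent

theorem ngn_multiplier_nonneg {c γ k : ℝ} (hk : 1 ≤ 2 * k) :
    0 ≤ k * (2 * k + 1) * (c - γ) ^ 2 - (k * (2 * k + 1) - 1) * c * (c - γ)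
      + k * (2 * k - 1) * c ^ 2 := by
  have hk' : 0 ≤ 2 * k - 1 := by linarith
  nlinarith [sq_nonneg (c - γ),
    mul_nonneg (mul_nonneg hk' (by linarith : 0 ≤ 1 + k)) (sq_nonneg (c - 2 * γ)),
    mul_nonneg (mul_nonneg hk' (by linarith : 0 ≤ 3 * k - 1)) (sq_nonneg c)]

theorem ngn_cleared_bound_of_one_le_two_mul {c γ k D m : ℝ} (hc : 0 < c) (hγ : 0 ≤ γ) (hγc : γ ≤ c)
    (hD : 0 ≤ D) (hm : 0 ≤ m) (hk : 1 ≤ 2 * k) (hcon : (c - γ) * (D + m) ≤ k * γ * D) :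
    (1 + k) * (1 + 2 * k) * γ * (c - γ) * (D + m) ≤
      2 * k * (1 + k) * c * γ * D + k * (2 * k - 1) * c ^ 2 * m := by
  have hweight : 0 ≤ c + (1 + 2 * k) * γ := by nlinarith
  -- `rhs - lhs = (c + (1 + 2k) γ) (kγD - (c - γ)(D + m)) + c (c - γ) D + multiplier * m`
  linarith [mul_nonneg hweight (sub_nonneg.2 hcon),
    mul_nonneg (mul_nonneg hc.le (sub_nonneg.2 hγc)) hD,
    mul_nonneg (ngn_multiplier_nonneg (c := c) (γ := γ) hk) hm]

theorem ngn_step_sq_mul_le {c L F m s : ℝ} (hc : 0 < c) (hL : 0 ≤ L) (hF : 0 < F) (hm : 0 ≤ m)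
    (hmF : m ≤ F) (hs : 0 ≤ s) (hsL : s ≤ 2 * L * (F - m)) :
    (c / (1 + c / (2 * F) * s)) ^ 2 * s ≤
      (4 * c * L / (1 + 2 * c * L)) * (c / (1 + c / (2 * F) * s)) * (F - m)
        + (2 * c ^ 2 * L / (1 + c * L)) * max ((2 * c * L - 1) / (2 * c * L + 1)) 0 * m := by
  set γ := c / (1 + c / (2 * F) * s) with hγ_def
  have hγ : 0 < γ := by positivity
  have hγc : γ ≤ c := div_le_self hc.le (le_add_of_nonneg_right (by positivity))
  have hid : c * γ * s = 2 * F * (c - γ) := by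
    rw [hγ_def]; field_simp; ring
  have hcon : (c - γ) * F ≤ c * L * γ * (F - m) := by
    nlinarith [mul_le_mul_of_nonneg_left hsL (by positivity : 0 ≤ c * γ)]
  rcases le_or_gt (2 * c * L) 1 with hk | hk
  · rw [max_eq_right (div_nonpos_of_nonpos_of_nonneg (by linarith) (by positivity)), mul_zero,
      zero_mul, add_zero]
    have h2L : 2 * L * γ ≤ 4 * c * L / (1 + 2 * c * L) := by
      have hγk : γ * (1 + 2 * c * L) ≤ 2 * c := by nlinarith
      rw [le_div_iff₀ (by positivity)]
      nlinarith [mul_le_mul_of_nonneg_left hγk hL]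
    calc γ ^ 2 * s ≤ γ ^ 2 * (2 * L * (F - m)) := by gcongr
      _ = 2 * L * γ * γ * (F - m) := by ring
      _ ≤ _ := by gcongr
  · rw [max_eq_left (div_nonneg (by linarith) (by positivity))]
    have key := ngn_cleared_bound_of_one_le_two_mul (k := c * L) hc hγ.le hγc (sub_nonneg.2 hmF)
      hm (by linarith) (by rwa [sub_add_cancel])
    rw [sub_add_cancel] at key
    have hrhs : (4 * c * L / (1 + 2 * c * L)) * γ * (F - m)
        + (2 * c ^ 2 * L / (1 + c * L)) * ((2 * c * L - 1) / (2 * c * L + 1)) * m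
        = (4 * c * L * (1 + c * L) * γ * (F - m) + 2 * c ^ 2 * L * (2 * c * L - 1) * m)
          / ((1 + c * L) * (1 + 2 * c * L)) := by
      field_simp; ring
    rw [hrhs, le_div_iff₀ (by positivity)]
    refine le_of_mul_le_mul_left ?_ hc
    have hlhs : c * (γ ^ 2 * s * ((1 + c * L) * (1 + 2 * c * L)))
        = 2 * ((1 + c * L) * (1 + 2 * (c * L)) * γ * (c - γ) * F) := by
      linear_combination (γ * (1 + c * L) * (1 + 2 * c * L)) * hid
    rw [hlhs]
    linarith [key]

theorem ngn_key_lemma_general {d : ℕ}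
    (f : EuclideanSpace ℝ (Fin d) → ℝ)
    (g : EuclideanSpace ℝ (Fin d) → EuclideanSpace ℝ (Fin d))
    (hgrad : ∀ x, HasGradientAt f (g x) x)
    (L c : ℝ) (hL : 0 ≤ L) (hc : 0 < c)
    (hsmooth : ∀ x y, ‖g x - g y‖ ≤ L * ‖x - y‖)
    (fstar : ℝ) (hlb : ∀ y, fstar ≤ f y)
    (hfstar : 0 ≤ fstar)
    (x : EuclideanSpace ℝ (Fin d)) (hx : 0 < f x) :
    (c / (1 + c / (2 * f x) * ‖g x‖ ^ 2)) ^ 2 * ‖g x‖ ^ 2 ≤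
      (4 * c * L / (1 + 2 * c * L)) * (c / (1 + c / (2 * f x) * ‖g x‖ ^ 2)) * (f x - fstar)
        + (2 * c ^ 2 * L / (1 + c * L)) * max ((2 * c * L - 1) / (2 * c * L + 1)) 0 * fstar :=
  ngn_step_sq_mul_le hc hL hx hfstar (hlb x) (sq_nonneg _)
    (sq_norm_le_of_lipschitz_gradient hgrad hsmooth hL hlb x)

theorem ngn_key_lemma {d : ℕ}
    (f : EuclideanSpace ℝ (Fin d) → ℝ)
    (g : EuclideanSpace ℝ (Fin d) → EuclideanSpace ℝ (Fin d))
    (hgrad : ∀ x, HasGradientAt f (g x) x)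
    (hconv : ConvexOn ℝ Set.univ f)
    (L c : ℝ) (hL : 0 ≤ L) (hc : 0 < c)
    (hsmooth : ∀ x y, ‖g x - g y‖ ≤ L * ‖x - y‖)
    (fstar : ℝ) (hlb : ∀ y, fstar ≤ f y) (hatt : ∃ y, f y = fstar)
    (hfstar : 0 ≤ fstar)
    (x : EuclideanSpace ℝ (Fin d)) (hx : 0 < f x) :
    (c / (1 + c / (2 * f x) * ‖g x‖ ^ 2)) ^ 2 * ‖g x‖ ^ 2 ≤
      (4 * c * L / (1 + 2 * c * L)) * (c / (1 + c / (2 * f x) * ‖g x‖ ^ 2)) * (f x - fstar)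
        + (2 * c ^ 2 * L / (1 + c * L)) * max ((2 * c * L - 1) / (2 * c * L + 1)) 0 * fstar :=
  ngn_key_lemma_general f g hgrad L c hL hc hsmooth fstar hlb hfstar x hx
end

section
/- Let f be an L-smooth function whose per-coordinate smoothness constants are L_j and assume the stochastic gradient has coordinate-wise bounded variance σ_j². If each per-coordinate step-size hyperparameter satisfies c_j ≤ 1/(2L_j), then the NGN-D iterates satisfy min_{0 ≤ k < K} E‖∇f(x^k)‖² ≤ 12(f(x^0) − f*)/(c_min K) + (1/c_min) Σ_{j=1}^d 18 L_j c_j² σ_j², where c_min = min_j c_j. -/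
/-!
Smoothness along coordinate `j` together with `f_i ≥ 0` gives the self-bound
`(∂_j f_i)² ≤ 2 L_j f_i`, so every NGN step size lies in `[c_j - L_j c_j², c_j]`. Coordinatewise the
NGN-D step is therefore an SGD step of size `c_j` up to an error of order `L_j c_j²`, and averaging
over the sampled batch gives the expected descent
`𝔼 f(x⁺) ≤ f(x) - (c_min / 4) ‖∇f(x)‖² + ∑_j L_j c_j² σ_j²`.
Telescoping over `K` steps and bounding the minimum by the mean yields the rate.
-/

open RealInnerProductSpace Finset
open scoped BigOperators

/-- At `φ = 0` the division yields `0`, so the step size is `c`. -/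
noncomputable def ngnStepSize (c φ g : ℝ) : ℝ := c / (1 + c / (2 * φ) * g ^ 2)

section StepSize

variable {c φ g : ℝ}

lemma ngnStepSize_nonneg (hc : 0 ≤ c) (hφ : 0 ≤ φ) : 0 ≤ ngnStepSize c φ g := by
  unfold ngnStepSize; positivity

lemma ngnStepSize_le (hc : 0 ≤ c) (hφ : 0 ≤ φ) : ngnStepSize c φ g ≤ c :=
  div_le_self hc (le_add_of_nonneg_right (by positivity))

lemma sub_ngnStepSize_le {L : ℝ} (hc : 0 ≤ c) (hφ : 0 ≤ φ) (hL : 0 ≤ L)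
    (hg : g ^ 2 ≤ 2 * L * φ) : c - ngnStepSize c φ g ≤ L * c ^ 2 := by
  set q := c / (2 * φ) * g ^ 2
  have hq : 0 ≤ q := by positivity
  have hqc : q ≤ c * L := by
    rcases hφ.eq_or_lt with rfl | hφ
    · simp [q]; positivity
    · calc q ≤ c / (2 * φ) * (2 * L * φ) := by unfold q; gcongr
        _ = c * L := by field_simp
  calc c - c / (1 + q) = c * q / (1 + q) := by field_simp; ring
    _ ≤ c * q := div_le_self (by positivity) (by linarith)
    _ ≤ c * (c * L) := by gcongr
    _ = L * c ^ 2 := by ring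

end StepSize

def CoordSmooth {κ : Type*} [Fintype κ] (L : κ → ℝ) (φ : EuclideanSpace ℝ κ → ℝ)
    (g : EuclideanSpace ℝ κ → EuclideanSpace ℝ κ) : Prop :=
  ∀ x h, φ (x + h) ≤ φ x + ⟪g x, h⟫ + (1 / 2) * ∑ j, L j * h j ^ 2

namespace CoordSmooth

variable {κ : Type*} [Fintype κ] {L : κ → ℝ} {φ : EuclideanSpace ℝ κ → ℝ}
  {g : EuclideanSpace ℝ κ → EuclideanSpace ℝ κ}

lemma le_add_sum (hφ : CoordSmooth L φ g) (x h : EuclideanSpace ℝ κ) :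
    φ (x + h) ≤ φ x + ∑ j, (g x j * h j + 1 / 2 * L j * h j ^ 2) := by
  have e : ⟪g x, h⟫ + 1 / 2 * ∑ j, L j * h j ^ 2 = ∑ j, (g x j * h j + 1 / 2 * L j * h j ^ 2) := by
    simp only [PiLp.inner_apply, RCLike.inner_apply, conj_trivial, mul_sum, ← sum_add_distrib]
    exact sum_congr rfl fun j _ => by ring
  linarith [hφ x h]

-- Plug in the minimiser `h = -(g_j / L_j) e_j` of the quadratic upper bound.
lemma sq_apply_le [DecidableEq κ] (hφ : CoordSmooth L φ g) (hφ0 : ∀ x, 0 ≤ φ x)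
    (x : EuclideanSpace ℝ κ) (j : κ) (hL : 0 < L j) : g x j ^ 2 ≤ 2 * L j * φ x := by
  set h := EuclideanSpace.single j (-g x j / L j)
  have hle := hφ.le_add_sum x h
  rw [sum_eq_single j (fun k _ hk => by simp [h, hk]) (by simp)] at hle
  have hval : g x j * h j + 1 / 2 * L j * h j ^ 2 = -(g x j ^ 2 / L j) / 2 := by
    simp only [h, PiLp.single_apply, if_true]
    field_simp; ring
  have hdiv : g x j ^ 2 / L j ≤ 2 * φ x := by linarith [hφ0 (x + h)]
  linarith [(div_le_iff₀' hL).1 hdiv]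

lemma expect {ι : Type*} [Fintype ι] [Nonempty ι] {φ : ι → EuclideanSpace ℝ κ → ℝ}
    {g : ι → EuclideanSpace ℝ κ → EuclideanSpace ℝ κ} (hφ : ∀ i, CoordSmooth L (φ i) (g i)) :
    CoordSmooth L (fun x => 𝔼 i, φ i x) (fun x => (Fintype.card ι : ℝ)⁻¹ • ∑ i, g i x) := by
  intro x h
  have hinner : ⟪(Fintype.card ι : ℝ)⁻¹ • ∑ i, g i x, h⟫ = 𝔼 i, ⟪g i x, h⟫ := by
    rw [real_inner_smul_left, sum_inner, Fintype.expect_eq_sum_div_card, inv_mul_eq_div]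
  calc 𝔼 i, φ i (x + h) ≤ 𝔼 i, (φ i x + ⟪g i x, h⟫ + (1 / 2) * ∑ j, L j * h j ^ 2) :=
        expect_le_expect fun i _ => hφ i x h
    _ = _ := by rw [expect_add_distrib, expect_add_distrib, Fintype.expect_const, hinner]

end CoordSmooth

lemma hasGradientAt_const_mul_sum {F ι : Type*} [NormedAddCommGroup F] [InnerProductSpace ℝ F]
    [CompleteSpace F] (s : Finset ι) (a : ℝ) {φ : ι → F → ℝ} {g : ι → F} {x : F}
    (h : ∀ i ∈ s, HasGradientAt (φ i) (g i) x) :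
    HasGradientAt (fun y => a * ∑ i ∈ s, φ i y) (a • ∑ i ∈ s, g i) x := by
  rw [hasGradientAt_iff_hasFDerivAt, map_smul, map_sum]
  exact (HasFDerivAt.fun_sum fun i hi => (h i hi).hasFDerivAt).const_mul a

lemma expect_sq_eq_sq_expect_add {ι : Type*} [Fintype ι] [Nonempty ι] (u : ι → ℝ) :
    𝔼 i, u i ^ 2 = (𝔼 i, u i) ^ 2 + 𝔼 i, (u i - 𝔼 j, u j) ^ 2 := by
  simp only [sub_sq, expect_add_distrib, expect_sub_distrib, ← mul_expect, ← expect_mul,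
    Fintype.expect_const]
  ring

lemma expect_coord_descent_le {ι : Type*} [Fintype ι] [Nonempty ι] {u γ : ι → ℝ} {c L : ℝ}
    (hc : 0 ≤ c) (hL : 0 ≤ L) (hcL : c * L ≤ 1 / 2) (hγ0 : ∀ i, 0 ≤ γ i) (hγc : ∀ i, γ i ≤ c)
    (hγ : ∀ i, c - γ i ≤ L * c ^ 2) :
    𝔼 i, (-γ i * (𝔼 j, u j) * u i + 1 / 2 * L * γ i ^ 2 * u i ^ 2) ≤
      -(c / 4) * (𝔼 j, u j) ^ 2 + L * c ^ 2 * 𝔼 i, (u i - 𝔼 j, u j) ^ 2 := by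
  set G := 𝔼 j, u j
  have hpoint : ∀ i, -γ i * G * u i + 1 / 2 * L * γ i ^ 2 * u i ^ 2 ≤
      -c * G * u i + 1 / 2 * L * c ^ 2 * G ^ 2 + L * c ^ 2 * u i ^ 2 := by
    intro i
    have hγsq : γ i ^ 2 ≤ c ^ 2 := pow_le_pow_left₀ (hγ0 i) (hγc i) 2
    have hcross : (c - γ i) * (G * u i) ≤ L * c ^ 2 * (1 / 2 * G ^ 2 + 1 / 2 * u i ^ 2) := by
      rcases le_or_gt 0 (G * u i) with hpos | hneg
      · calc (c - γ i) * (G * u i) ≤ L * c ^ 2 * (G * u i) := by gcongr; exact hγ i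
          _ ≤ _ := by gcongr; nlinarith [sq_nonneg (G - u i)]
      · calc (c - γ i) * (G * u i) ≤ 0 :=
            mul_nonpos_of_nonneg_of_nonpos (sub_nonneg.2 (hγc i)) hneg.le
          _ ≤ _ := by positivity
    have hquad : L * γ i ^ 2 * u i ^ 2 ≤ L * c ^ 2 * u i ^ 2 := by gcongr
    linarith
  calc 𝔼 i, (-γ i * G * u i + 1 / 2 * L * γ i ^ 2 * u i ^ 2)
      ≤ 𝔼 i, (-c * G * u i + 1 / 2 * L * c ^ 2 * G ^ 2 + L * c ^ 2 * u i ^ 2) :=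
        expect_le_expect fun i _ => hpoint i
    _ = -c * G ^ 2 + 3 / 2 * (c * L) * c * G ^ 2 + L * c ^ 2 * 𝔼 i, (u i - G) ^ 2 := by
        rw [expect_add_distrib, expect_add_distrib, Fintype.expect_const, ← mul_expect,
          ← mul_expect, expect_sq_eq_sq_expect_add u]
        ring
    _ ≤ -c * G ^ 2 + 3 / 2 * (1 / 2) * c * G ^ 2 + L * c ^ 2 * 𝔼 i, (u i - G) ^ 2 := by
        gcongr
    _ = _ := by ring

noncomputable def ngnStep {κ : Type*} [Fintype κ] (c : κ → ℝ) (φ : EuclideanSpace ℝ κ → ℝ)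
    (g : EuclideanSpace ℝ κ → EuclideanSpace ℝ κ) (x : EuclideanSpace ℝ κ) :
    EuclideanSpace ℝ κ :=
  WithLp.toLp 2 fun j => x j - ngnStepSize (c j) (φ x) (g x j) * g x j

lemma expect_ngnStep_le {ι κ : Type*} [Fintype ι] [Nonempty ι] [Fintype κ] [DecidableEq κ]
    {L c σ : κ → ℝ} {cmin : ℝ} {φ : ι → EuclideanSpace ℝ κ → ℝ}
    {g : ι → EuclideanSpace ℝ κ → EuclideanSpace ℝ κ} {f : EuclideanSpace ℝ κ → ℝ}
    {gf : EuclideanSpace ℝ κ → EuclideanSpace ℝ κ}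
    (hφ : ∀ i, CoordSmooth L (φ i) (g i)) (hφ0 : ∀ i x, 0 ≤ φ i x) (hf : CoordSmooth L f gf)
    (hL : ∀ j, 0 < L j) (hc : ∀ j, 0 ≤ c j) (hcL : ∀ j, c j * L j ≤ 1 / 2)
    (hcmin : ∀ j, cmin ≤ c j) (x : EuclideanSpace ℝ κ) (hmean : ∀ j, 𝔼 i, g i x j = gf x j)
    (hvar : ∀ j, 𝔼 i, (g i x j - gf x j) ^ 2 ≤ σ j ^ 2) :
    𝔼 i, f (ngnStep c (φ i) (g i) x) ≤
      f x - cmin / 4 * ‖gf x‖ ^ 2 + ∑ j, L j * c j ^ 2 * σ j ^ 2 := by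
  set γ : ι → κ → ℝ := fun i j => ngnStepSize (c j) (φ i x) (g i x j)
  have hstep : ∀ i, f (ngnStep c (φ i) (g i) x) ≤
      f x + ∑ j, (-γ i j * gf x j * g i x j + 1 / 2 * L j * γ i j ^ 2 * g i x j ^ 2) := by
    intro i
    have hx : ngnStep c (φ i) (g i) x = x + WithLp.toLp 2 fun j => -(γ i j * g i x j) := by
      ext j; simp [ngnStep, γ, sub_eq_add_neg]
    refine hx ▸ (hf.le_add_sum x _).trans (le_of_eq ?_)
    congr 1
    exact sum_congr rfl fun j _ => by ring
  have hcoord : ∀ j, 𝔼 i, (-γ i j * gf x j * g i x j + 1 / 2 * L j * γ i j ^ 2 * g i x j ^ 2) ≤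
      -(c j / 4) * gf x j ^ 2 + L j * c j ^ 2 * σ j ^ 2 := by
    intro j
    have h := expect_coord_descent_le (u := fun i => g i x j) (γ := fun i => γ i j) (hc j) (hL j).le
      (hcL j) (fun i => ngnStepSize_nonneg (hc j) (hφ0 i x))
      (fun i => ngnStepSize_le (hc j) (hφ0 i x))
      (fun i => sub_ngnStepSize_le (hc j) (hφ0 i x) (hL j).le
        ((hφ i).sq_apply_le (hφ0 i) x j (hL j)))
    rw [hmean j] at h
    exact h.trans (add_le_add_right
      (mul_le_mul_of_nonneg_left (hvar j) (mul_nonneg (hL j).le (sq_nonneg _))) _)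
  have hnorm : ∑ j, -(c j / 4) * gf x j ^ 2 ≤ -(cmin / 4 * ‖gf x‖ ^ 2) := by
    rw [EuclideanSpace.norm_sq_eq, mul_sum, ← sum_neg_distrib]
    gcongr with j
    simp only [Real.norm_eq_abs, sq_abs]
    nlinarith [hcmin j, sq_nonneg (gf x j)]
  calc 𝔼 i, f (ngnStep c (φ i) (g i) x)
      ≤ 𝔼 i, (f x + ∑ j, (-γ i j * gf x j * g i x j + 1 / 2 * L j * γ i j ^ 2 * g i x j ^ 2)) :=
        expect_le_expect fun i _ => hstep i
    _ = f x + ∑ j, 𝔼 i, (-γ i j * gf x j * g i x j + 1 / 2 * L j * γ i j ^ 2 * g i x j ^ 2) := by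
        rw [expect_add_distrib, Fintype.expect_const, expect_sum_comm]
    _ ≤ f x + ∑ j, (-(c j / 4) * gf x j ^ 2 + L j * c j ^ 2 * σ j ^ 2) := by
        gcongr with j; exact hcoord j
    _ ≤ f x - cmin / 4 * ‖gf x‖ ^ 2 + ∑ j, L j * c j ^ 2 * σ j ^ 2 := by
        rw [sum_add_distrib]; linarith

lemma expect_pi_fin_succ {α M : Type*} [Fintype α] [AddCommMonoid M] [Module ℚ≥0 M] {k : ℕ}
    (F : (Fin (k + 1) → α) → M) : 𝔼 s, F s = 𝔼 t : Fin k → α, 𝔼 i, F (Fin.snoc t i) := by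
  calc 𝔼 s, F s = 𝔼 p : α × (Fin k → α), F (Fin.snoc p.2 p.1) :=
        (Fintype.expect_equiv (Fin.snocEquiv fun _ => α) _ _ fun _ => rfl).symm
    _ = 𝔼 i, 𝔼 t : Fin k → α, F (Fin.snoc t i) := by
        rw [← univ_product_univ, expect_product]
    _ = _ := expect_comm _ _ _

lemma expect_path_succ_le {ι E : Type*} [Fintype ι] {X : ∀ k, (Fin k → ι) → E} {T : ι → E → E}
    (hX : ∀ k s, X (k + 1) s = T (s (Fin.last k)) (X k (Fin.init s))) {V W : E → ℝ}
    (hVW : ∀ x, 𝔼 i, V (T i x) ≤ W x) (k : ℕ) : 𝔼 s, V (X (k + 1) s) ≤ 𝔼 s, W (X k s) := by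
  rw [expect_pi_fin_succ]
  simp only [hX, Fin.init_snoc, Fin.snoc_last]
  exact expect_le_expect fun t _ => hVW (X k t)

lemma exists_lt_le_of_descent {a b : ℕ → ℝ} {μ C a' : ℝ} {K : ℕ} (hμ : 0 < μ) (hK : 0 < K)
    (hdesc : ∀ k, a (k + 1) ≤ a k - μ * b k + C) (hlow : a' ≤ a K) :
    ∃ k < K, b k ≤ (a 0 - a') / (μ * K) + C / μ := by
  have htel : ∀ n, μ * ∑ k ∈ range n, b k ≤ a 0 - a n + n * C := by
    intro n
    induction n with
    | zero => simp
    | succ n ih => rw [sum_range_succ, mul_add]; push_cast; linarith [hdesc n]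
  have hKpos : (0 : ℝ) < K := by exact_mod_cast hK
  have hsum : ∑ k ∈ range K, b k ≤ ∑ _k ∈ range K, ((a 0 - a') / (μ * K) + C / μ) := by
    rw [sum_const, card_range, nsmul_eq_mul]
    calc ∑ k ∈ range K, b k ≤ (a 0 - a' + K * C) / μ := by
          rw [le_div_iff₀' hμ]; linarith [htel K]
      _ = K * ((a 0 - a') / (μ * K) + C / μ) := by field_simp
  obtain ⟨k, hk, hbk⟩ := exists_le_of_sum_le (nonempty_range_iff.2 hK.ne') hsum
  exact ⟨k, mem_range.1 hk, hbk⟩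

theorem exists_expect_norm_sq_le_of_ngnStep {ι κ : Type*} [Fintype ι] [Nonempty ι] [Fintype κ]
    [DecidableEq κ] {L c σ : κ → ℝ} {cmin fstar : ℝ} {φ : ι → EuclideanSpace ℝ κ → ℝ}
    {g : ι → EuclideanSpace ℝ κ → EuclideanSpace ℝ κ} {f : EuclideanSpace ℝ κ → ℝ}
    {gf : EuclideanSpace ℝ κ → EuclideanSpace ℝ κ} {x₀ : EuclideanSpace ℝ κ}
    {X : ∀ k, (Fin k → ι) → EuclideanSpace ℝ κ} {K : ℕ}
    (hφ : ∀ i, CoordSmooth L (φ i) (g i)) (hφ0 : ∀ i x, 0 ≤ φ i x) (hf : CoordSmooth L f gf)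
    (hmean : ∀ x j, 𝔼 i, g i x j = gf x j) (hvar : ∀ x j, 𝔼 i, (g i x j - gf x j) ^ 2 ≤ σ j ^ 2)
    (hL : ∀ j, 0 < L j) (hc : ∀ j, 0 ≤ c j) (hcL : ∀ j, c j * L j ≤ 1 / 2)
    (hcmin : 0 < cmin) (hcmin_le : ∀ j, cmin ≤ c j) (hfstar : ∀ x, fstar ≤ f x)
    (hX₀ : ∀ s, X 0 s = x₀)
    (hX : ∀ k s,
      X (k + 1) s = ngnStep c (φ (s (Fin.last k))) (g (s (Fin.last k))) (X k (Fin.init s)))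
    (hK : 0 < K) :
    ∃ k < K, 𝔼 s, ‖gf (X k s)‖ ^ 2 ≤
      4 * (f x₀ - fstar) / (cmin * K) + 1 / cmin * ∑ j, 4 * L j * c j ^ 2 * σ j ^ 2 := by
  set C := ∑ j, L j * c j ^ 2 * σ j ^ 2
  have hdesc : ∀ k, 𝔼 s, f (X (k + 1) s) ≤ 𝔼 s, f (X k s) - cmin / 4 * 𝔼 s, ‖gf (X k s)‖ ^ 2 + C :=
    fun k => by
      refine (expect_path_succ_le hX (fun x => expect_ngnStep_le hφ hφ0 hf hL hc hcL hcmin_le x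
        (hmean x) (hvar x)) k).trans_eq ?_
      rw [expect_add_distrib, expect_sub_distrib, ← mul_expect, Fintype.expect_const]
  obtain ⟨k, hk, hbound⟩ := exists_lt_le_of_descent (a := fun k => 𝔼 s, f (X k s))
    (b := fun k => 𝔼 s, ‖gf (X k s)‖ ^ 2) (by positivity : 0 < cmin / 4) hK hdesc
    (le_expect univ_nonempty fun s _ => hfstar (X K s))
  refine ⟨k, hk, hbound.trans_eq ?_⟩
  have h4C : ∑ j, 4 * L j * c j ^ 2 * σ j ^ 2 = 4 * C := by
    rw [mul_sum]; exact sum_congr rfl fun j _ => by ring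
  simp only [hX₀, Fintype.expect_const, h4C]
  field_simp

/-- Batches are sampled uniformly from the family `fS : Fin m → _`; `X k s` is the iterate after `k`
steps along the sample path `s`, and expectations are averages over all paths. -/
theorem ngn_d_nonconvex_convergence {d m : ℕ} (hm : 0 < m)
    (fS : Fin m → EuclideanSpace ℝ (Fin d) → ℝ)
    (gS : Fin m → EuclideanSpace ℝ (Fin d) → EuclideanSpace ℝ (Fin d))
    (f : EuclideanSpace ℝ (Fin d) → ℝ)
    (gf : EuclideanSpace ℝ (Fin d) → EuclideanSpace ℝ (Fin d))
    (hf : ∀ x, f x = (∑ i, fS i x) / m)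
    (hgS : ∀ i x, HasGradientAt (fS i) (gS i x) x)
    (hgf : ∀ x, HasGradientAt f (gf x) x)
    (hnonneg : ∀ i x, 0 ≤ fS i x)
    (L : Fin d → ℝ) (hL : ∀ j, 0 < L j)
    (hsmooth : ∀ i x h, fS i (x + h) ≤ fS i x + ⟪gS i x, h⟫ + (1/2) * ∑ j, L j * (h j) ^ 2)
    (σ : Fin d → ℝ)
    (hvar : ∀ x j, (∑ i, (gS i x j - gf x j) ^ 2) / m ≤ σ j ^ 2)
    (c : Fin d → ℝ) (hc : ∀ j, 0 < c j) (hcL : ∀ j, c j ≤ 1 / (2 * L j))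
    (cmin : ℝ) (hcmin : IsLeast (Set.range c) cmin)
    (fstar : ℝ) (hfstar : ∀ x, fstar ≤ f x)
    (x0 : EuclideanSpace ℝ (Fin d))
    (X : ∀ k : ℕ, (Fin k → Fin m) → EuclideanSpace ℝ (Fin d))
    (hX0 : ∀ s, X 0 s = x0)
    (hXs : ∀ (k : ℕ) (s : Fin (k + 1) → Fin m) (j : Fin d),
      X (k + 1) s j =
        X k (fun i => s i.castSucc) j -
          (c j / (1 + c j / (2 * fS (s (Fin.last k)) (X k (fun i => s i.castSucc))) *
              (gS (s (Fin.last k)) (X k (fun i => s i.castSucc)) j) ^ 2)) *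
            gS (s (Fin.last k)) (X k (fun i => s i.castSucc)) j)
    (K : ℕ) (hK : 0 < K) :
    ∃ k < K, (∑ s : Fin k → Fin m, ‖gf (X k s)‖ ^ 2) / (m : ℝ) ^ k ≤
      12 * (f x0 - fstar) / (cmin * K) +
        (1 / cmin) * ∑ j, 18 * L j * (c j) ^ 2 * (σ j) ^ 2 := by
  have : Nonempty (Fin m) := ⟨⟨0, hm⟩⟩
  obtain ⟨⟨j₀, hj₀⟩, hcmin_le⟩ := hcmin
  have hcmin_pos : 0 < cmin := hj₀ ▸ hc j₀
  have hf_avg : f = fun x => (m : ℝ)⁻¹ * ∑ i, fS i x :=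
    funext fun x => (hf x).trans (div_eq_inv_mul _ _)
  have hgf_avg : ∀ x, gf x = (m : ℝ)⁻¹ • ∑ i, gS i x := fun x =>
    (hgf x).unique <| hf_avg ▸ hasGradientAt_const_mul_sum univ _ fun i _ => hgS i x
  have hsmooth_f : CoordSmooth L f gf := by
    simpa only [Fintype.card_fin, Fintype.expect_eq_sum_div_card, ← hf, ← hgf_avg]
      using CoordSmooth.expect hsmooth
  obtain ⟨k, hk, hbound⟩ := exists_expect_norm_sq_le_of_ngnStep hsmooth hnonneg hsmooth_f
    (fun x j => by
      simp [hgf_avg x, Fintype.expect_eq_sum_div_card, WithLp.ofLp_sum, div_eq_inv_mul])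
    (fun x j => by simpa [Fintype.expect_eq_sum_div_card] using hvar x j)
    hL (fun j => (hc j).le)
    (fun j => by linarith [(le_div_iff₀ (mul_pos two_pos (hL j))).1 (hcL j)])
    hcmin_pos (fun j => hcmin_le ⟨j, rfl⟩) hfstar hX0 (fun k s => by ext j; exact hXs k s j) hK
  refine ⟨k, hk, ?_⟩
  rw [Fintype.expect_eq_sum_div_card, Fintype.card_fun, Fintype.card_fin, Fintype.card_fin,
    Nat.cast_pow] at hbound
  refine hbound.trans ?_
  refine add_le_add (div_le_div_of_nonneg_right ?_ (by positivity)) ?_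
  · linarith [hfstar x0]
  · refine mul_le_mul_of_nonneg_left (sum_le_sum fun j _ => ?_) (by positivity)
    nlinarith [mul_nonneg (mul_nonneg (hL j).le (sq_nonneg (c j))) (sq_nonneg (σ j))]
end

section
/- For the one-step descent of a function satisfying coordinate-wise smoothness, if at iteration k the per-coordinate step-sizes satisfy γ_j^k ∈ [c_j/(1+c_j L_j), c_j] with c_j ≤ 1/(2L_j), then E_k[f(x^{k+1})] − f(x^k) ≤ Σ_j (−(c_j/12) (∂_j f(x^k))² + (3 L_j c_j²/2) σ_j²). -/
/-!
Coordinate-wise smoothness bounds `f (x⁺) - f x` by `∑ⱼ (gⱼ sⱼ + Lⱼ/2 sⱼ²)` with `sⱼ = -γⱼ Gⱼ`,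
so the claim splits into one scalar inequality per coordinate, averaged over the samples.
Write `a = c/(1+cL)` for the lower end of the step-size interval. Since `a ≤ γ ≤ c`, the cross
term splits as `-γ g G ≤ -a g G + (c-a)(g² + G²)/2`, and `γ² G² ≤ c² G²`. Averaging, with mean `g`
for `G` and `g² + V` for `G²`, gives `(c - 2a + Lc²/2) g² + ((c-a)/2 + Lc²/2) V`.
Now `c - a = a c L ≤ c² L`, and for `cL ≤ 1/2` one has `c - 2a + Lc²/2 ≤ -c/12`, with equality
at `cL = 1/2`.
-/

open RealInnerProductSpace Finset

noncomputable def quadUpperModel (L g s : ℝ) : ℝ := g * s + L / 2 * s ^ 2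

lemma sub_le_sum_quadUpperModel {ι : Type*} [Fintype ι] {f : EuclideanSpace ℝ ι → ℝ}
    {gf : EuclideanSpace ℝ ι → EuclideanSpace ℝ ι} {L : ι → ℝ}
    (hsmooth : ∀ x h, f (x + h) ≤ f x + ⟪gf x, h⟫ + (1/2) * ∑ j, L j * (h j) ^ 2)
    (x y : EuclideanSpace ℝ ι) :
    f y - f x ≤ ∑ j, quadUpperModel (L j) (gf x j) (y j - x j) := by
  have h := hsmooth x (y - x)
  have hinner : ⟪gf x, y - x⟫ = ∑ j, gf x j * (y j - x j) := by
    simp [PiLp.inner_apply, mul_comm]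
  have hquad : (1 / 2) * ∑ j, L j * ((y - x) j) ^ 2 = ∑ j, L j / 2 * (y j - x j) ^ 2 := by
    rw [mul_sum]
    refine sum_congr rfl fun j _ => ?_
    simp only [PiLp.sub_apply]
    ring
  rw [add_sub_cancel, hinner, hquad] at h
  simp only [quadUpperModel, sum_add_distrib]
  linarith

lemma quadUpperModel_neg_mul_le {L a c γ g G : ℝ} (hL : 0 ≤ L) (ha : 0 ≤ a) (haγ : a ≤ γ)
    (hγc : γ ≤ c) :
    quadUpperModel L g (-(γ * G)) ≤
      -a * g * G + (c - a) / 2 * (g ^ 2 + G ^ 2) + L * c ^ 2 / 2 * G ^ 2 := by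
  have hcross : -((γ - a) * g * G) ≤ (c - a) / 2 * (g ^ 2 + G ^ 2) := by
    nlinarith [mul_nonneg (sub_nonneg.2 haγ) (sq_nonneg (g + G)),
      mul_nonneg (sub_nonneg.2 hγc) (add_nonneg (sq_nonneg g) (sq_nonneg G))]
  have hsq : γ ^ 2 ≤ c ^ 2 := pow_le_pow_left₀ (ha.trans haγ) hγc 2
  have hquad : L / 2 * (γ ^ 2 * G ^ 2) ≤ L / 2 * (c ^ 2 * G ^ 2) := by gcongr
  unfold quadUpperModel
  linarith

lemma sum_sq_eq_card_mul_sq_add_sum_sq_sub {ι : Type*} [Fintype ι] {G : ι → ℝ} {g : ℝ}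
    (hG : ∑ i, G i = Fintype.card ι * g) :
    ∑ i, G i ^ 2 = Fintype.card ι * g ^ 2 + ∑ i, (G i - g) ^ 2 := by
  simp only [sub_sq, sum_add_distrib, sum_sub_distrib, ← sum_mul, ← mul_sum, hG, sum_const,
    card_univ, nsmul_eq_mul]
  ring

section StepSizeCoefficients

variable {L c : ℝ} (hL : 0 < L) (hc : 0 < c)
include hL hc

lemma sub_div_one_add_mul_le : c - c / (1 + c * L) ≤ c ^ 2 * L := by
  have hpos : 0 < 1 + c * L := by positivity
  rw [sub_le_iff_le_add, ← sub_le_iff_le_add', le_div_iff₀ hpos]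
  nlinarith [mul_pos (mul_pos hc hc) (mul_pos hc hL), mul_pos (mul_pos hc hc) hL]

lemma descent_coeff_le (hcL : c * L ≤ 1 / 2) :
    c - 2 * (c / (1 + c * L)) + L * c ^ 2 / 2 ≤ -(c / 12) := by
  have hpos : 0 < 1 + c * L := by positivity
  rw [mul_div_assoc', ← sub_nonneg]
  have key : -(c / 12) - (c - 2 * c / (1 + c * L) + L * c ^ 2 / 2)
      = c * (1 - 2 * (c * L)) * (3 * (c * L) + 11) / (12 * (1 + c * L)) := by
    field_simp
    ring
  rw [key]
  have : 0 ≤ 1 - 2 * (c * L) := by linarith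
  positivity

end StepSizeCoefficients

lemma mean_quadUpperModel_le {ι : Type*} [Fintype ι] [Nonempty ι] {L c g s : ℝ}
    (hL : 0 < L) (hc : 0 < c) (hcL : c * L ≤ 1 / 2) {G γ : ι → ℝ}
    (hγ : ∀ i, c / (1 + c * L) ≤ γ i ∧ γ i ≤ c)
    (hmean : (∑ i, G i) / Fintype.card ι = g)
    (hvar : (∑ i, (G i - g) ^ 2) / Fintype.card ι ≤ s) :
    (∑ i, quadUpperModel L g (-(γ i * G i))) / Fintype.card ι
      ≤ -(c / 12) * g ^ 2 + 3 * L * c ^ 2 / 2 * s := by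
  set a := c / (1 + c * L)
  set n : ℝ := (Fintype.card ι : ℝ)
  set V := (∑ i, (G i - g) ^ 2) / n
  have hn : 0 < n := by simp only [n]; exact_mod_cast Fintype.card_pos
  have hsum : ∑ i, G i = n * g := by rw [← hmean]; field_simp
  have hsumsq : ∑ i, G i ^ 2 = n * (g ^ 2 + V) := by
    rw [sum_sq_eq_card_mul_sq_add_sum_sq_sub hsum, mul_add, mul_div_cancel₀ _ hn.ne']
  have ha : 0 ≤ a := by positivity
  have hV : 0 ≤ V := by positivity
  have hA := descent_coeff_le hL hc hcL
  have hB : (c - a) / 2 + L * c ^ 2 / 2 ≤ 3 * L * c ^ 2 / 2 := by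
    nlinarith [sub_div_one_add_mul_le hL hc]
  have hB₀ : 0 ≤ (c - a) / 2 + L * c ^ 2 / 2 := by
    have : a ≤ c := div_le_self hc.le (by nlinarith [mul_pos hc hL])
    nlinarith [sq_nonneg c]
  calc (∑ i, quadUpperModel L g (-(γ i * G i))) / n
      ≤ (∑ i, (-a * g * G i + (c - a) / 2 * (g ^ 2 + G i ^ 2) + L * c ^ 2 / 2 * G i ^ 2))
          / n := by
        gcongr with i
        exact quadUpperModel_neg_mul_le hL.le ha (hγ i).1 (hγ i).2
    _ = (c - 2 * a + L * c ^ 2 / 2) * g ^ 2 + ((c - a) / 2 + L * c ^ 2 / 2) * V := by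
        simp only [sum_add_distrib, ← mul_sum, hsum, hsumsq, sum_const, card_univ,
          nsmul_eq_mul]
        field_simp
        ring
    _ ≤ -(c / 12) * g ^ 2 + 3 * L * c ^ 2 / 2 * s := by
        gcongr ?_ + ?_
        · exact mul_le_mul_of_nonneg_right hA (sq_nonneg g)
        · exact (mul_le_mul_of_nonneg_left hvar hB₀).trans
            (mul_le_mul_of_nonneg_right hB (hV.trans hvar))

theorem ngn_d_one_step_descent_general {d m : ℕ} (hm : 0 < m)
    (f : EuclideanSpace ℝ (Fin d) → ℝ)
    (gf : EuclideanSpace ℝ (Fin d) → EuclideanSpace ℝ (Fin d))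
    (L : Fin d → ℝ) (hL : ∀ j, 0 < L j)
    (hsmooth : ∀ x h, f (x + h) ≤ f x + ⟪gf x, h⟫ + (1/2) * ∑ j, L j * (h j) ^ 2)
    (xk : EuclideanSpace ℝ (Fin d))
    (G : Fin m → EuclideanSpace ℝ (Fin d))
    (hunbiased : ∀ j, (∑ i, G i j) / m = gf xk j)
    (σ : Fin d → ℝ)
    (hvar : ∀ j, (∑ i, (G i j - gf xk j) ^ 2) / m ≤ σ j ^ 2)
    (c : Fin d → ℝ) (hc : ∀ j, 0 < c j) (hcL : ∀ j, c j ≤ 1 / (2 * L j))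
    (γ : Fin m → Fin d → ℝ)
    (hγ : ∀ i j, c j / (1 + c j * L j) ≤ γ i j ∧ γ i j ≤ c j)
    (x' : Fin m → EuclideanSpace ℝ (Fin d))
    (hx' : ∀ i j, x' i j = xk j - γ i j * G i j) :
    (∑ i, f (x' i)) / m - f xk ≤
      ∑ j, (-(c j / 12) * (gf xk j) ^ 2 + 3 * L j * (c j) ^ 2 / 2 * σ j ^ 2) := by
  have : Nonempty (Fin m) := ⟨⟨0, hm⟩⟩
  set Q : Fin m → Fin d → ℝ := fun i j => quadUpperModel (L j) (gf xk j) (-(γ i j * G i j))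
  have hsample : ∀ i, f (x' i) - f xk ≤ ∑ j, Q i j := fun i => by
    simpa [Q, hx'] using sub_le_sum_quadUpperModel hsmooth xk (x' i)
  have hcoord : ∀ j, (∑ i, Q i j) / m ≤
      -(c j / 12) * (gf xk j) ^ 2 + 3 * L j * (c j) ^ 2 / 2 * σ j ^ 2 := by
    intro j
    have hcLj : c j * L j ≤ 1 / 2 := by
      have h := hcL j
      rw [le_div_iff₀ (by linarith [hL j])] at h
      linarith
    simpa using mean_quadUpperModel_le (hL j) (hc j) hcLj (fun i => hγ i j)
      (by simpa using hunbiased j) (by simpa using hvar j)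
  calc (∑ i, f (x' i)) / m - f xk = (∑ i, (f (x' i) - f xk)) / m := by
        field_simp
        simp
    _ ≤ (∑ i, ∑ j, Q i j) / m := by gcongr with i; exact hsample i
    _ = ∑ j, (∑ i, Q i j) / m := by rw [sum_comm, sum_div]
    _ ≤ _ := sum_le_sum fun j _ => hcoord j

/-- One-step descent inequality for coordinate-wise step-sizes lying in the NGN-D
interval. `G i` is the stochastic gradient at `xk` for sample `i`, sampled uniformly. -/
theorem ngn_d_one_step_descent {d m : ℕ} (hm : 0 < m)
    (f : EuclideanSpace ℝ (Fin d) → ℝ)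
    (gf : EuclideanSpace ℝ (Fin d) → EuclideanSpace ℝ (Fin d))
    (hgf : ∀ x, HasGradientAt f (gf x) x)
    (L : Fin d → ℝ) (hL : ∀ j, 0 < L j)
    (hsmooth : ∀ x h, f (x + h) ≤ f x + ⟪gf x, h⟫ + (1/2) * ∑ j, L j * (h j) ^ 2)
    (xk : EuclideanSpace ℝ (Fin d))
    (G : Fin m → EuclideanSpace ℝ (Fin d))
    (hunbiased : ∀ j, (∑ i, G i j) / m = gf xk j)
    (σ : Fin d → ℝ)
    (hvar : ∀ j, (∑ i, (G i j - gf xk j) ^ 2) / m ≤ σ j ^ 2)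
    (c : Fin d → ℝ) (hc : ∀ j, 0 < c j) (hcL : ∀ j, c j ≤ 1 / (2 * L j))
    (γ : Fin m → Fin d → ℝ)
    (hγ : ∀ i j, c j / (1 + c j * L j) ≤ γ i j ∧ γ i j ≤ c j)
    (x' : Fin m → EuclideanSpace ℝ (Fin d))
    (hx' : ∀ i j, x' i j = xk j - γ i j * G i j) :
    (∑ i, f (x' i)) / m - f xk ≤
      ∑ j, (-(c j / 12) * (gf xk j) ^ 2 + 3 * L j * (c j) ^ 2 / 2 * σ j ^ 2) :=
  ngn_d_one_step_descent_general hm f gf L hL hsmooth xk G hunbiased σ hvar c hc hcL γ hγ x' hx'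
end

section
/- Minimizing the regularized linearization p ↦ (r(x) + ⟨∇r(x), p⟩)² + (1/(2c)) pᵀ Σ p over p ∈ ℝ^d, where Σ is symmetric positive definite, r(x) = √(f(x)), f(x) > 0, yields the unique minimizer p* = −(c / (1 + (c/(2 f(x))) ‖∇f(x)‖²_{Σ^{-1}})) Σ^{-1} ∇f(x), where ‖v‖²_{Σ^{-1}} = vᵀ Σ^{-1} v. -/
/-!
The objective `(a + ⟪u, p⟫)² + μ pᵀ S p` is a quadratic in `p` with Hessian `2 (u uᵀ + μ S)`.
Expanding it around the point `p⋆ = -(a / (μ + uᵀ S⁻¹ u)) S⁻¹ u`, where its gradient vanishes,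
gives `F p = F p⋆ + ⟪u, p - p⋆⟫² + μ (p - p⋆)ᵀ S (p - p⋆)`, and the excess is positive for
`p ≠ p⋆` because `S` is positive definite. With `a = √f(x)`, `u = ∇f(x) / (2 √f(x))` and
`μ = 1 / (2c)` the point `p⋆` is the stated NGN step; this closed form is what the
Sherman–Morrison formula produces for `(u uᵀ + μ S)⁻¹ u`.
-/

open Matrix

namespace Matrix

variable {n : Type*} [Fintype n]

theorem dotProduct_mulVec_comm_of_isHermitian {S : Matrix n n ℝ} (hS : S.IsHermitian)
    (p q : n → ℝ) : p ⬝ᵥ S *ᵥ q = q ⬝ᵥ S *ᵥ p := by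
  rw [dotProduct_mulVec, ← mulVec_transpose, ← conjTranspose_eq_transpose_of_trivial, hS.eq,
    dotProduct_comm]

def sqAffineAddQuadForm (a μ : ℝ) (u : n → ℝ) (S : Matrix n n ℝ) (p : n → ℝ) : ℝ :=
  (a + u ⬝ᵥ p) ^ 2 + μ * (p ⬝ᵥ S *ᵥ p)

theorem sqAffineAddQuadForm_add {S : Matrix n n ℝ} (hS : S.IsHermitian) (a μ : ℝ)
    (u q h : n → ℝ) :
    sqAffineAddQuadForm a μ u S (q + h) = sqAffineAddQuadForm a μ u S q
      + 2 * (h ⬝ᵥ ((a + u ⬝ᵥ q) • u + μ • S *ᵥ q))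
      + ((u ⬝ᵥ h) ^ 2 + μ * (h ⬝ᵥ S *ᵥ h)) := by
  simp only [sqAffineAddQuadForm, dotProduct_add, add_dotProduct, mulVec_add, dotProduct_smul,
    smul_eq_mul, dotProduct_mulVec_comm_of_isHermitian hS h q, dotProduct_comm h u]
  ring

variable [DecidableEq n]

theorem sqAffineAddQuadForm_stationary {S : Matrix n n ℝ} (hS : S.PosDef) (a : ℝ) {μ : ℝ}
    (hμ : 0 < μ) (u : n → ℝ) :
    let p := -(a / (μ + u ⬝ᵥ S⁻¹ *ᵥ u)) • S⁻¹ *ᵥ u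
    (a + u ⬝ᵥ p) • u + μ • S *ᵥ p = 0 := by
  intro p
  have hK : 0 ≤ u ⬝ᵥ S⁻¹ *ᵥ u := hS.inv.posSemidef.dotProduct_mulVec_nonneg u
  have hSS : S *ᵥ S⁻¹ *ᵥ u = u := by
    rw [mulVec_mulVec, mul_nonsing_inv _ hS.det_pos.ne'.isUnit, one_mulVec]
  simp only [p, dotProduct_smul, mulVec_smul, hSS, smul_smul, smul_eq_mul, ← add_smul]
  convert zero_smul ℝ u
  field_simp
  ring

theorem sqAffineAddQuadForm_isUniqueMin {S : Matrix n n ℝ} (hS : S.PosDef) (a : ℝ) {μ : ℝ}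
    (hμ : 0 < μ) (u : n → ℝ) :
    let pstar := -(a / (μ + u ⬝ᵥ S⁻¹ *ᵥ u)) • S⁻¹ *ᵥ u
    (∀ p, sqAffineAddQuadForm a μ u S pstar ≤ sqAffineAddQuadForm a μ u S p) ∧
      ∀ p, sqAffineAddQuadForm a μ u S p ≤ sqAffineAddQuadForm a μ u S pstar → p = pstar := by
  intro pstar
  have hexcess (p : n → ℝ) : sqAffineAddQuadForm a μ u S p = sqAffineAddQuadForm a μ u S pstar
      + ((u ⬝ᵥ (p - pstar)) ^ 2 + μ * ((p - pstar) ⬝ᵥ S *ᵥ (p - pstar))) := by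
    have := sqAffineAddQuadForm_add hS.1 a μ u pstar (p - pstar)
    rwa [add_sub_cancel, sqAffineAddQuadForm_stationary hS a hμ u, dotProduct_zero,
      mul_zero, add_zero] at this
  have hnonneg (p : n → ℝ) : 0 ≤ μ * ((p - pstar) ⬝ᵥ S *ᵥ (p - pstar)) :=
    mul_nonneg hμ.le (hS.posSemidef.dotProduct_mulVec_nonneg _)
  refine ⟨fun p => ?_, fun p hp => ?_⟩
  · nlinarith [hexcess p, hnonneg p, sq_nonneg (u ⬝ᵥ (p - pstar))]
  · by_contra hne
    have hpos := hS.dotProduct_mulVec_pos (sub_ne_zero.2 hne)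
    rw [star_trivial] at hpos
    nlinarith [hexcess p, sq_nonneg (u ⬝ᵥ (p - pstar)), mul_pos hμ hpos]

end Matrix

theorem ngn_diagonal_minimizer_general {d : ℕ}
    (f : (Fin d → ℝ) → ℝ) (x : Fin d → ℝ)
    (gf : Fin d → ℝ)
    (hfx : 0 < f x)
    (c : ℝ) (hc : 0 < c)
    (S : Matrix (Fin d) (Fin d) ℝ) (hS : S.PosDef) :
    let obj : (Fin d → ℝ) → ℝ := fun p =>
      (Real.sqrt (f x) + ((1 / (2 * Real.sqrt (f x))) • gf) ⬝ᵥ p) ^ 2 +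
        (1 / (2 * c)) * (p ⬝ᵥ S.mulVec p)
    let pstar : Fin d → ℝ :=
      -(c / (1 + c / (2 * f x) * (gf ⬝ᵥ S⁻¹.mulVec gf))) • S⁻¹.mulVec gf
    (∀ p, obj pstar ≤ obj p) ∧ ∀ p, obj p ≤ obj pstar → p = pstar := by
  intro obj pstar
  set a := Real.sqrt (f x)
  have ha : 0 < a := Real.sqrt_pos.2 hfx
  have hfa : f x = a ^ 2 := (Real.sq_sqrt hfx.le).symm
  have hpstar : pstar = -(a / (1 / (2 * c) + (1 / (2 * a)) • gf ⬝ᵥ S⁻¹ *ᵥ (1 / (2 * a)) • gf)) •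
      S⁻¹ *ᵥ (1 / (2 * a)) • gf := by
    simp only [pstar, mulVec_smul, dotProduct_smul, smul_dotProduct, smul_smul, smul_eq_mul, hfa]
    congr 2
    field_simp
  rw [hpstar]
  exact sqAffineAddQuadForm_isUniqueMin hS a (by positivity) _

/-- The regularized linearization of `r = √f` with a positive-definite weight
matrix `Σ` has the preconditioned NGN update as its unique minimizer. -/
theorem ngn_diagonal_minimizer {d : ℕ}
    (f : (Fin d → ℝ) → ℝ) (x : Fin d → ℝ)
    (gf : Fin d → ℝ)
    (hdiff : DifferentiableAt ℝ f x)
    (hgrad : ∀ p, fderiv ℝ f x p = gf ⬝ᵥ p)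
    (hfx : 0 < f x)
    (c : ℝ) (hc : 0 < c)
    (S : Matrix (Fin d) (Fin d) ℝ) (hS : S.PosDef) :
    let obj : (Fin d → ℝ) → ℝ := fun p =>
      (Real.sqrt (f x) + ((1 / (2 * Real.sqrt (f x))) • gf) ⬝ᵥ p) ^ 2 +
        (1 / (2 * c)) * (p ⬝ᵥ S.mulVec p)
    let pstar : Fin d → ℝ :=
      -(c / (1 + c / (2 * f x) * (gf ⬝ᵥ S⁻¹.mulVec gf))) • S⁻¹.mulVec gf
    (∀ p, obj pstar ≤ obj p) ∧ ∀ p, obj p ≤ obj pstar → p = pstar :=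
  ngn_diagonal_minimizer_general f x gf hfx c hc S hS
end
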